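/- arXiv:1106.1299 — 4 statements merged into one kernel-verified Lean document; each statement's English description precedes it below -/
import Mathlib

section
/- For a signature λ of length k with λ_k = 0 and 0 < q < 1, the ratio s_λ(0, q^{-1}, ..., q^{1-k}) / s_λ(1, q^{-1}, ..., q^{1-k}) equals ∏_{i=1}^{k-1} (1 - q^{k-i}) / (1 - q^{λ_i - i + k}), and in particular this ratio is at least ∏_{i=1}^∞ (1 - q^i). -/
/-!
With `e_j = λ_j + m - j` (strictly decreasing, `e_m = 0`) and `x_i = q^{-i}`, the alternant
`det[x_i^{e_j}]` is the Vandermonde determinant of `w_j = q^{-e_j}`; splitting off `w_m = 1`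
gives `∏_{j<m} (1 - w_j)` times the Vandermonde determinant of `w_0, …, w_{m-1}`. Replacing
`x_0 = 1` by `0` turns the first row into the unit vector at the last column, and the Laplace
expansion leaves `(-1)^m ∏_{j<m} w_j` times the same Vandermonde determinant. So the alternants
differ by `∏_{j<m} (1 - q^{e_j})⁻¹`, and the denominators `∏_{i<j} (x_i - x_j)`, which split off
`x_0` in the same way, by `∏_{k=1}^m (1 - q^k)⁻¹`. For the bound, every `1 - q^{e_j}` lies in
`(0, 1]` and the partial products of `∏ (1 - q^n)` decrease to the infinite product.
-/

open scoped BigOperators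

/-- The rational Schur function `s_λ(x₁,…,x_k)` (indices 0-based). -/
noncomputable def schurR (N : ℕ) (l : Fin N → ℤ) (x : Fin N → ℝ) : ℝ :=
  Matrix.det (Matrix.of fun i j : Fin N => x i ^ (l j + (N : ℤ) - 1 - (j : ℤ))) /
    ∏ i : Fin N, ∏ j ∈ Finset.univ.filter (fun j => i < j), (x i - x j)

open Finset Matrix

namespace Fin

variable {M : Type*} [CommMonoid M] {n : ℕ}

theorem prod_prod_Ioi_succ (f : Fin (n + 1) → Fin (n + 1) → M) :
    ∏ i, ∏ j ∈ Ioi i, f i j =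
      (∏ j : Fin n, f 0 j.succ) * ∏ i : Fin n, ∏ j ∈ Ioi i, f i.succ j.succ := by
  simp [prod_univ_succ]

theorem prod_Ioi_castSucc (f : Fin (n + 1) → M) (i : Fin n) :
    ∏ j ∈ Ioi i.castSucc, f j = (∏ j ∈ Ioi i, f j.castSucc) * f (last n) := by
  rw [← Ioc_top, top_eq_last, ← Ioo_insert_right (castSucc_lt_last i), ← map_castSuccEmb_Ioi,
    prod_insert (by simp), prod_map, mul_comm]
  rfl

theorem prod_prod_Ioi_castSucc (f : Fin (n + 1) → Fin (n + 1) → M) :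
    ∏ i, ∏ j ∈ Ioi i, f i j =
      (∏ i : Fin n, f i.castSucc (last n)) * ∏ i : Fin n, ∏ j ∈ Ioi i, f i.castSucc j.castSucc := by
  simp [prod_univ_castSucc, prod_Ioi_castSucc, prod_mul_distrib, mul_comm, ← top_eq_last]

theorem prod_univ_intCast_sub (m : ℕ) (f : ℤ → M) :
    ∏ k : Fin m, f ((m : ℤ) - k) = ∏ k : Fin m, f ((k : ℤ) + 1) := by
  rw [← Equiv.prod_comp revPerm]
  refine prod_congr rfl fun k _ => ?_
  congr 1
  simp only [revPerm_apply, val_rev]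
  omega

end Fin

theorem zpow_neg_natCast_zpow {G : Type*} [DivisionMonoid G] (q : G) (i : ℕ) (e : ℤ) :
    (q ^ (-(i : ℤ))) ^ e = (q ^ (-e)) ^ i := by
  rw [← zpow_natCast, ← _root_.zpow_mul, ← _root_.zpow_mul, neg_mul_comm, mul_comm]

theorem neg_div_one_sub_eq_inv_one_sub_inv {K : Type*} [Field K] {w : K} (hw : w ≠ 0) :
    -w / (1 - w) = (1 - w⁻¹)⁻¹ := by
  rw [show 1 - w⁻¹ = (w - 1) / w by field_simp, inv_div, ← neg_sub w 1, neg_div_neg_eq]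

namespace Matrix

section CommRing

variable {R : Type*} [CommRing R] {n : ℕ}

theorem det_vandermonde_castSucc (w : Fin (n + 1) → R) :
    det (vandermonde w) =
      (∏ i : Fin n, (w (Fin.last n) - w i.castSucc)) * det (vandermonde fun i => w i.castSucc) := by
  rw [det_vandermonde, det_vandermonde, Fin.prod_prod_Ioi_castSucc]

theorem det_of_pow_succ (w : Fin n → R) :
    det (of fun i j : Fin n => w j ^ ((i : ℕ) + 1)) = (∏ j, w j) * det (vandermonde w) := by
  rw [← det_transpose (vandermonde w), ← det_mul_row]
  congr with i j
  simp [vandermonde_apply, pow_succ, mul_comm]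

end CommRing

variable {K : Type*} [Field K] {n : ℕ}

theorem det_of_zpow_of_eq_zero (x : Fin (n + 1) → K) (e : Fin (n + 1) → ℤ) (hx : x 0 = 0)
    (he : ∀ j, j ≠ Fin.last n → e j ≠ 0) (hlast : e (Fin.last n) = 0) :
    det (of fun i j => x i ^ e j) =
      (-1) ^ n * det (of fun i j : Fin n => x i.succ ^ e j.castSucc) := by
  rw [det_succ_row_zero, sum_eq_single (Fin.last n)]
  · rw [of_apply, hlast, zpow_zero, mul_one, Fin.val_last, Fin.succAbove_last]
    rfl
  · intro j _ hj
    rw [of_apply, hx, _root_.zero_zpow _ (he j hj), mul_zero, zero_mul]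
  · simp

theorem det_of_zpow_geom (q : K) (e : Fin n → ℤ) :
    det (of fun i j : Fin n => (q ^ (-(i : ℤ))) ^ e j) =
      det (vandermonde fun j => q ^ (-e j)) := by
  rw [← det_transpose (vandermonde _)]
  congr with i j
  exact zpow_neg_natCast_zpow q i (e j)

theorem det_of_zpow_geom_div {m : ℕ} {q : K} (hq : q ≠ 0) (e : Fin (m + 1) → ℤ)
    (he : ∀ j, j ≠ Fin.last m → e j ≠ 0) (hlast : e (Fin.last m) = 0)
    (hinj : Function.Injective fun j : Fin m => q ^ (-e j.castSucc)) :
    det (of fun i j : Fin (m + 1) => (if i = 0 then 0 else q ^ (-(i : ℤ))) ^ e j) /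
        det (of fun i j : Fin (m + 1) => (q ^ (-(i : ℤ))) ^ e j) =
      ∏ j : Fin m, (1 - q ^ e j.castSucc)⁻¹ := by
  set w : Fin m → K := fun j => q ^ (-e j.castSucc)
  have hzero : det (of fun i j : Fin (m + 1) => (if i = 0 then 0 else q ^ (-(i : ℤ))) ^ e j) =
      (-1) ^ m * ((∏ j, w j) * det (vandermonde w)) := by
    rw [det_of_zpow_of_eq_zero _ e (by simp) he hlast, ← det_of_pow_succ]
    congr with i j
    simp only [if_neg (Fin.succ_ne_zero i), zpow_neg_natCast_zpow, Fin.val_succ, w]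
  have hfull : det (of fun i j : Fin (m + 1) => (q ^ (-(i : ℤ))) ^ e j) =
      (∏ j, (1 - w j)) * det (vandermonde w) := by
    rw [det_of_zpow_geom, det_vandermonde_castSucc]
    simp [w, hlast]
  rw [hzero, hfull, ← mul_assoc, mul_div_mul_right _ _ (det_vandermonde_ne_zero_iff.mpr hinj),
    ← Fin.prod_const, ← prod_mul_distrib, ← prod_div_distrib]
  refine prod_congr rfl fun j _ => ?_
  rw [neg_one_mul, neg_div_one_sub_eq_inv_one_sub_inv (zpow_ne_zero _ hq), _root_.zpow_neg,
    inv_inv]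

end Matrix

theorem prod_prod_Ioi_sub_div {K : Type*} [Field K] {n : ℕ} (x y : Fin (n + 1) → K)
    (hx0 : x 0 = 0) (hy0 : y 0 = 1) (hxy : ∀ k : Fin n, x k.succ = y k.succ)
    (hinj : Function.Injective fun k : Fin n => x k.succ) (hne : ∀ k : Fin n, x k.succ ≠ 0) :
    (∏ i, ∏ j ∈ Ioi i, (x i - x j)) / ∏ i, ∏ j ∈ Ioi i, (y i - y j) =
      ∏ k : Fin n, (1 - (x k.succ)⁻¹)⁻¹ := by
  have htail : ∏ i : Fin n, ∏ j ∈ Ioi i, (x i.succ - x j.succ) ≠ 0 :=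
    prod_ne_zero_iff.mpr fun i _ => prod_ne_zero_iff.mpr fun j hj =>
      sub_ne_zero.mpr (hinj.ne (mem_Ioi.mp hj).ne)
  rw [Fin.prod_prod_Ioi_succ, Fin.prod_prod_Ioi_succ]
  simp only [hx0, hy0, ← hxy]
  rw [mul_div_mul_right _ _ htail, ← prod_div_distrib]
  refine prod_congr rfl fun k _ => ?_
  rw [zero_sub, neg_div_one_sub_eq_inv_one_sub_inv (hne k)]

theorem tprod_le_prod_of_nonneg_of_le_one {ι : Type*} {f : ι → ℝ} (h0 : ∀ i, 0 ≤ f i)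
    (h1 : ∀ i, f i ≤ 1) (s : Finset ι) : ∏' i, f i ≤ ∏ i ∈ s, f i := by
  have hbdd : BddBelow (Set.range fun s : Finset ι => ∏ i ∈ s, f i) :=
    ⟨0, by rintro _ ⟨t, rfl⟩; exact prod_nonneg fun i _ => h0 i⟩
  have hprod : HasProd f (⨅ s : Finset ι, ∏ i ∈ s, f i) :=
    tendsto_atTop_ciInf (prod_anti_set_of_le_one h0 h1) hbdd
  exact hprod.tprod_eq ▸ ciInf_le hbdd s

theorem schurR_zero_div_schurR_one (m : ℕ) {q : ℝ} (hq0 : 0 < q) (hq1 : q ≠ 1)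
    (l : Fin (m + 1) → ℤ) (hl : Antitone l) (hlast : l (Fin.last m) = 0) :
    schurR (m + 1) l (fun i => if i = 0 then 0 else q ^ (-(i : ℤ))) /
        schurR (m + 1) l (fun i => q ^ (-(i : ℤ))) =
      ∏ k : Fin m, (1 - q ^ ((k : ℤ) + 1)) / (1 - q ^ (l k.castSucc + m - k)) := by
  set e : Fin (m + 1) → ℤ := fun j => l j + ((m + 1 : ℕ) : ℤ) - 1 - j
  have he_anti : StrictAnti e := fun i j hij => by
    have := hl hij.le
    have : (i : ℤ) < j := by exact_mod_cast hij
    simp only [e]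
    omega
  have he_last : e (Fin.last m) = 0 := by simp [e, hlast]
  have he_ne : ∀ j, j ≠ Fin.last m → e j ≠ 0 := fun j hj =>
    he_last ▸ (he_anti (Fin.lt_last_iff_ne_last.mpr hj)).ne'
  have hzpow_inj := zpow_right_injective₀ hq0 hq1
  have hx_inj : Function.Injective fun k : Fin m =>
      (if k.succ = 0 then 0 else q ^ (-((k.succ : ℕ) : ℤ)) : ℝ) := fun a b h => by
    simp only [if_neg (Fin.succ_ne_zero _)] at h
    exact Fin.ext (by simpa using hzpow_inj h)
  simp only [schurR, filter_lt_eq_Ioi]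
  rw [div_div_div_comm, det_of_zpow_geom_div hq0.ne' e he_ne he_last
    (hzpow_inj.comp (neg_injective.comp (he_anti.injective.comp (Fin.castSucc_injective m)))),
    prod_prod_Ioi_sub_div _ _ (by simp) (by simp) (fun k => if_neg k.succ_ne_zero)
      hx_inj (fun k => by simp [zpow_ne_zero, hq0.ne']), ← prod_div_distrib]
  refine prod_congr rfl fun k _ => ?_
  rw [if_neg k.succ_ne_zero, inv_div_inv, ← _root_.zpow_neg, neg_neg]
  simp only [e, Fin.val_succ, Fin.val_castSucc]
  push_cast
  ring_nf

/-- For a signature `λ` of length `k = m+1` with last coordinate `0` and `0<q<1`,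
`s_λ(0,q⁻¹,…,q^{1-k}) / s_λ(1,q⁻¹,…,q^{1-k})
  = ∏_{i=1}^{k-1} (1-q^{k-i})/(1-q^{λ_i-i+k})`, and this ratio is at least
`∏_{i=1}^∞ (1-q^i)`. -/
theorem stmt5 (m : ℕ) (q : ℝ) (hq0 : 0 < q) (hq1 : q < 1)
    (l : Fin (m + 1) → ℤ) (hl : Antitone l) (hlast : l (Fin.last m) = 0) :
    schurR (m + 1) l (fun i => if i = 0 then 0 else q ^ (-(i : ℤ))) /
        schurR (m + 1) l (fun i => q ^ (-(i : ℤ))) =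
      ∏ i ∈ Finset.univ.filter (fun i : Fin (m + 1) => (i : ℕ) + 1 < m + 1),
        (1 - q ^ ((m : ℤ) - (i : ℤ))) / (1 - q ^ (l i + (m : ℤ) - (i : ℤ))) ∧
    (∏' n : ℕ, (1 - q ^ (n + 1))) ≤
      schurR (m + 1) l (fun i => if i = 0 then 0 else q ^ (-(i : ℤ))) /
        schurR (m + 1) l (fun i => q ^ (-(i : ℤ))) := by
  have hfactor : ∀ n : ℤ, 0 < n → 0 < 1 - q ^ n ∧ 1 - q ^ n ≤ 1 := fun n hn =>
    ⟨sub_pos.mpr (zpow_lt_one₀ hq0 hq1 hn), sub_le_self _ (zpow_pos hq0 n).le⟩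
  have hfilter : univ.filter (fun i : Fin (m + 1) => (i : ℕ) + 1 < m + 1) =
      univ.map Fin.castSuccEmb := by
    ext j
    simp only [mem_filter, mem_univ, true_and, mem_map, Fin.castSuccEmb_apply, Fin.ext_iff,
      Fin.val_castSucc]
    exact ⟨fun h => ⟨⟨j, by omega⟩, rfl⟩, fun ⟨k, hk⟩ => by omega⟩
  rw [schurR_zero_div_schurR_one m hq0 hq1.ne l hl hlast, hfilter, prod_map]
  constructor
  · simp only [Fin.castSuccEmb_apply, Fin.val_castSucc, prod_div_distrib,
      Fin.prod_univ_intCast_sub m (fun n => 1 - q ^ n)]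
  calc ∏' n : ℕ, (1 - q ^ (n + 1))
      ≤ ∏ n ∈ range m, (1 - q ^ (n + 1)) :=
        tprod_le_prod_of_nonneg_of_le_one (fun n => sub_nonneg.mpr (pow_le_one₀ hq0.le hq1.le))
          (fun n => sub_le_self _ (pow_nonneg hq0.le _)) _
    _ = ∏ k : Fin m, (1 - q ^ ((k : ℤ) + 1)) := by
        rw [← Fin.prod_univ_eq_prod_range]
        norm_cast
    _ ≤ _ := prod_le_prod (fun k _ => (hfactor _ (by positivity)).1.le) fun k _ => by
        have hlk : 0 ≤ l k.castSucc := hlast ▸ hl (Fin.le_last _)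
        have hfk := hfactor (l k.castSucc + m - k) (by omega)
        exact le_div_self (hfactor _ (by positivity)).1.le hfk.1 hfk.2
end

section
/- Let μ and λ be signatures of lengths N-1 and N respectively with interlacing μ ≺ λ (i.e. λ_{i+1} ≤ μ_i ≤ λ_i for all i), and let ξ₁,...,ξ_N be distinct positive reals. Then the quantities P(λ→μ) = ξ_N^{|λ|-|μ|} · det[ξ_i^{μ_j+N-1-j}]_{i,j=1}^{N-1} / det[ξ_i^{λ_j+N-j}]_{i,j=1}^{N} · ∏_{i=1}^{N-1}(ξ_i - ξ_N), extended by 0 when μ does not interlace λ, are nonnegative and sum to 1 over all μ of length N-1: ∑_{μ ≺ λ} P(λ→μ) = 1. -/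
/-!
Through the bialternant formula `s_λ = a_{λ+δ} / a_δ`, the link is a ratio of Schur functions,
`P(λ → μ) = ξ_N^{|λ|-|μ|} s_μ(ξ₁, …, ξ_{N-1}) / s_λ(ξ₁, …, ξ_N)`, so everything follows from
the branching rule `s_λ(x, y) = ∑_{μ ≺ λ} y^{|λ|-|μ|} s_μ(x)`. That rule is proved for
alternants: column operations eliminate `y` from `a_{λ+δ}(x, y)`, leaving entries that are
`(x_i - y)` times geometric sums over `[λ_{j+1}, λ_j]`, and multilinearity of the determinant
turns the product of these sums into the sum over interlacing `μ`. The branching rule gives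
`∑ P = 1` directly, and by induction on the number of variables it gives `s_λ > 0` for distinct
positive variables, hence `P ≥ 0`.
-/

open scoped BigOperators Classical

/-- The stochastic link `P_N^↓(λ→μ)` of the paper (sizes `N+1 → N`, 0-based):
`ξ_N^{|λ|-|μ|} · det[ξ_i^{μ_j+N-1-j}] / det[ξ_i^{λ_j+N-j}] · ∏_{i=1}^{N-1}(ξ_i-ξ_N)`
when `μ ≺ λ`, and `0` otherwise. -/
noncomputable def linkP (N : ℕ) (ξ : Fin (N + 1) → ℝ) (l : Fin (N + 1) → ℤ)
    (m : Fin N → ℤ) : ℝ :=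
  if ∀ i : Fin N, l i.succ ≤ m i ∧ m i ≤ l i.castSucc then
    ξ (Fin.last N) ^ ((∑ i, l i) - ∑ i, m i) *
      (Matrix.det (Matrix.of fun i j : Fin N =>
          ξ i.castSucc ^ (m j + (N : ℤ) - 1 - (j : ℤ))) /
        Matrix.det (Matrix.of fun i j : Fin (N + 1) =>
          ξ i ^ (l j + (N : ℤ) - (j : ℤ)))) *
      ∏ i : Fin N, (ξ i.castSucc - ξ (Fin.last N))
  else 0

open Finset Matrix

theorem Finset.sum_Icc_int_sub {G : Type*} [AddCommGroup G] (f : ℤ → G) {a b : ℤ}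
    (hab : a - 1 ≤ b) : ∑ v ∈ Icc a b, (f (v + 1) - f v) = f (b + 1) - f a := by
  induction b, hab using Int.leInduction with
  | base => simp
  | succ b hb ih =>
    rw [← insert_Icc_right_eq_Icc_add_one (by omega), sum_insert (by simp), ih]
    abel

theorem zpow_sum₀ {G₀ ι : Type*} [CommGroupWithZero G₀] {a : G₀} (ha : a ≠ 0) (s : Finset ι)
    (f : ι → ℤ) : a ^ (∑ i ∈ s, f i) = ∏ i ∈ s, a ^ f i := by
  induction s using Finset.induction with
  | empty => simp
  | insert i s hi ih => rw [sum_insert hi, prod_insert hi, zpow_add₀ ha, ih]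

theorem sub_mul_sum_Icc_zpow {K : Type*} [Field K] {x y : K} (hx : x ≠ 0) (hy : y ≠ 0)
    {a b : ℤ} (hab : b ≤ a + 1) (c : ℤ) :
    (x - y) * ∑ v ∈ Icc b a, y ^ (a - v) * x ^ (v + c)
      = x ^ (a + 1 + c) - y ^ (a - b + 1) * x ^ (b + c) := by
  have hstep : ∀ v : ℤ, (x - y) * (y ^ (a - v) * x ^ (v + c))
      = y ^ (a - (v + 1) + 1) * x ^ (v + 1 + c) - y ^ (a - v + 1) * x ^ (v + c) := by
    intro v
    rw [show a - (v + 1) + 1 = a - v by ring, show v + 1 + c = v + c + 1 by ring,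
      zpow_add_one₀ hx, zpow_add_one₀ hy]
    ring
  rw [mul_sum, sum_congr rfl fun v _ => hstep v,
    sum_Icc_int_sub (fun v => y ^ (a - v + 1) * x ^ (v + c)) (by omega)]
  simp

namespace Matrix

variable {R : Type*} [CommRing R]

theorem det_of_sum_eq_sum_piFinset {n ι : Type*} [Fintype n] [DecidableEq n] [DecidableEq ι]
    (s : n → Finset ι) (g : n → ι → n → R) :
    det (of fun i j => ∑ v ∈ s j, g j v i) =
      ∑ m ∈ Fintype.piFinset s, det (of fun i j => g j (m j) i) := by
  rw [← det_transpose]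
  simp_rw [← det_transpose (of fun i j => g j _ i)]
  convert (detRowAlternating (R := R) (n := n)).map_sum_finset g s using 1
  · congr 1
    ext j i
    simp
  · rfl

theorem det_eq_of_forall_col_eq_smul_add_succ {n : ℕ}
    {A B : Matrix (Fin (n + 1)) (Fin (n + 1)) R} (c : Fin n → R)
    (A_last : ∀ i, A i (Fin.last n) = B i (Fin.last n))
    (A_castSucc : ∀ i (j : Fin n), A i j.castSucc = B i j.castSucc + c j * A i j.succ) :
    det A = det B := by
  rw [← det_submatrix_equiv_self Fin.revPerm A, ← det_submatrix_equiv_self Fin.revPerm B]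
  refine det_eq_of_forall_col_eq_smul_add_pred (fun j => c j.rev) (fun i => ?_) fun i j => ?_
  · simpa using A_last i.rev
  · simpa [Fin.rev_succ, Fin.rev_castSucc] using A_castSucc i.rev j.rev

theorem det_succ_row_last_of_forall_eq_zero {n : ℕ}
    {A : Matrix (Fin (n + 1)) (Fin (n + 1)) R} (h : ∀ j : Fin n, A (Fin.last n) j.castSucc = 0) :
    det A = A (Fin.last n) (Fin.last n) * det (A.submatrix Fin.castSucc Fin.castSucc) := by
  rw [det_succ_row A (Fin.last n), Fin.sum_univ_castSucc]
  simp [h, ← two_mul, pow_mul]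

theorem det_of_zpow_eq_zpow_last_mul_det {K : Type*} [Field K] {n : ℕ} (ξ : Fin (n + 1) → K)
    (hy : ξ (Fin.last n) ≠ 0) (e : Fin (n + 1) → ℤ) :
    det (of fun i j => ξ i ^ e j) = ξ (Fin.last n) ^ e (Fin.last n) *
      det (of fun i j : Fin n => ξ i.castSucc ^ e j.castSucc
        - ξ (Fin.last n) ^ (e j.castSucc - e j.succ) * ξ i.castSucc ^ e j.succ) := by
  let B : Matrix (Fin (n + 1)) (Fin (n + 1)) K := of fun i j => Fin.lastCases (ξ i ^ e (Fin.last n))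
    (fun j => ξ i ^ e j.castSucc - ξ (Fin.last n) ^ (e j.castSucc - e j.succ) * ξ i ^ e j.succ) j
  have hB : det (of fun i j => ξ i ^ e j) = det B :=
    det_eq_of_forall_col_eq_smul_add_succ (fun j => ξ (Fin.last n) ^ (e j.castSucc - e j.succ))
      (by simp [B]) (by simp [B])
  rw [hB, det_succ_row_last_of_forall_eq_zero (by simp [B, ← zpow_add₀ hy])]
  congr 1
  · simp [B]
  · congr 1
    ext i j
    simp [B]

end Matrix

section Alternant

variable {K : Type*} [Field K]

/-- The alternant `a_{l+δ}(x)`, where `δ = (n-1, …, 0)`. -/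
noncomputable def alternant (n : ℕ) (x : Fin n → K) (l : Fin n → ℤ) : K :=
  det (of fun i j : Fin n => x i ^ (l j + (n : ℤ) - 1 - (j : ℤ)))

noncomputable def interlacing {n : ℕ} (l : Fin (n + 1) → ℤ) : Finset (Fin n → ℤ) :=
  Fintype.piFinset fun j => Icc (l j.succ) (l j.castSucc)

theorem mem_interlacing {n : ℕ} {l : Fin (n + 1) → ℤ} {m : Fin n → ℤ} :
    m ∈ interlacing l ↔ ∀ i, l i.succ ≤ m i ∧ m i ≤ l i.castSucc := by
  simp [interlacing]

theorem antitone_of_mem_interlacing {n : ℕ} {l : Fin (n + 1) → ℤ} {m : Fin n → ℤ}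
    (hm : m ∈ interlacing l) : Antitone m := by
  rw [mem_interlacing] at hm
  cases n with
  | zero => exact fun i => i.elim0
  | succ n =>
    refine Fin.antitone_iff_succ_le.mpr fun i => ?_
    calc m i.succ ≤ l i.succ.castSucc := (hm i.succ).2
      _ = l i.castSucc.succ := by rw [Fin.succ_castSucc]
      _ ≤ m i.castSucc := (hm i.castSucc).1

theorem castSucc_mem_interlacing {n : ℕ} {l : Fin (n + 1) → ℤ} (hl : Antitone l) :
    (fun i => l i.castSucc) ∈ interlacing l :=
  mem_interlacing.mpr fun i => ⟨hl (Fin.castSucc_lt_succ (i := i)).le, le_rfl⟩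

theorem interlacing_zero {n : ℕ} : interlacing (0 : Fin (n + 1) → ℤ) = {0} := by
  ext m
  simp only [mem_interlacing, mem_singleton, funext_iff, Pi.zero_apply]
  exact forall_congr' fun i => by omega

theorem alternant_succ_eq_det {n : ℕ} (ξ : Fin (n + 1) → K) (hy : ξ (Fin.last n) ≠ 0)
    (l : Fin (n + 1) → ℤ) :
    alternant (n + 1) ξ l = ξ (Fin.last n) ^ l (Fin.last n) * det (of fun i j : Fin n =>
      ξ i.castSucc ^ (l j.castSucc + 1 + ((n : ℤ) - 1 - j)) -
        ξ (Fin.last n) ^ (l j.castSucc - l j.succ + 1) *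
          ξ i.castSucc ^ (l j.succ + ((n : ℤ) - 1 - j))) := by
  rw [alternant, det_of_zpow_eq_zpow_last_mul_det ξ hy]
  simp only [Fin.val_last, Fin.val_castSucc, Fin.val_succ]
  push_cast
  ring_nf

theorem zpow_mul_alternant {n : ℕ} {y : K} (hy : y ≠ 0) (x : Fin n → K) (l : Fin (n + 1) → ℤ)
    (m : Fin n → ℤ) :
    y ^ (∑ i, l i - ∑ j, m j) * alternant n x m = y ^ l (Fin.last n) *
      det (of fun i j => y ^ (l j.castSucc - m j) * x i ^ (m j + ((n : ℤ) - 1 - j))) := by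
  have hscale := det_mul_row (fun j => y ^ (l j.castSucc - m j))
    (of fun i j : Fin n => x i ^ (m j + ((n : ℤ) - 1 - j)))
  simp only [of_apply] at hscale
  rw [hscale, ← zpow_sum₀ hy, ← mul_assoc, ← zpow_add₀ hy, Fin.sum_univ_castSucc,
    sum_sub_distrib, alternant]
  simp only [add_sub_assoc]
  congr 2
  ring

theorem alternant_succ {n : ℕ} (ξ : Fin (n + 1) → K) (hξ : ∀ i, ξ i ≠ 0) (l : Fin (n + 1) → ℤ)
    (hl : Antitone l) :
    alternant (n + 1) ξ l = (∏ i : Fin n, (ξ i.castSucc - ξ (Fin.last n))) *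
      ∑ m ∈ interlacing l, ξ (Fin.last n) ^ (∑ i, l i - ∑ j, m j) *
        alternant n (fun i => ξ i.castSucc) m := by
  set x : Fin n → K := fun i => ξ i.castSucc
  set y := ξ (Fin.last n)
  let g : Fin n → ℤ → Fin n → K := fun j v i =>
    y ^ (l j.castSucc - v) * x i ^ (v + ((n : ℤ) - 1 - j))
  have hgeom : ∀ i j : Fin n, (x i - y) * ∑ v ∈ Icc (l j.succ) (l j.castSucc), g j v i =
      x i ^ (l j.castSucc + 1 + ((n : ℤ) - 1 - j)) -
        y ^ (l j.castSucc - l j.succ + 1) * x i ^ (l j.succ + ((n : ℤ) - 1 - j)) := fun i j =>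
    sub_mul_sum_Icc_zpow (hξ _) (hξ _) (by linarith [hl (Fin.castSucc_lt_succ (i := j)).le]) _
  have hfactor := det_mul_column (fun i => x i - y)
    (of fun i j : Fin n => ∑ v ∈ Icc (l j.succ) (l j.castSucc), g j v i)
  simp only [of_apply, hgeom] at hfactor
  rw [alternant_succ_eq_det ξ (hξ _), hfactor,
    det_of_sum_eq_sum_piFinset (fun j => Icc (l j.succ) (l j.castSucc)) g, mul_sum, mul_sum,
    mul_sum]
  refine sum_congr rfl fun m _ => ?_
  rw [zpow_mul_alternant (hξ _)]
  exact mul_left_comm _ _ _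

theorem alternant_succ_zero {n : ℕ} (ξ : Fin (n + 1) → K) (hξ : ∀ i, ξ i ≠ 0) :
    alternant (n + 1) ξ 0 =
      (∏ i : Fin n, (ξ i.castSucc - ξ (Fin.last n))) * alternant n (fun i => ξ i.castSucc) 0 := by
  simp [alternant_succ ξ hξ 0 antitone_const, interlacing_zero]

theorem alternant_zero_ne_zero {n : ℕ} (x : Fin n → K) (hx : ∀ i, x i ≠ 0)
    (hinj : Function.Injective x) : alternant n x 0 ≠ 0 := by
  induction n with
  | zero => simp [alternant]
  | succ n ih =>
    rw [alternant_succ_zero x hx]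
    refine mul_ne_zero (prod_ne_zero_iff.mpr fun i _ => sub_ne_zero.mpr (hinj.ne ?_))
      (ih _ (fun i => hx _) (hinj.comp (Fin.castSucc_injective n)))
    exact (Fin.castSucc_lt_last i).ne

/-- The Schur function `s_l(x)`, by the bialternant formula. -/
noncomputable def schur (n : ℕ) (x : Fin n → K) (l : Fin n → ℤ) : K :=
  alternant n x l / alternant n x 0

theorem schur_succ {n : ℕ} (ξ : Fin (n + 1) → K) (hξ : ∀ i, ξ i ≠ 0)
    (hinj : Function.Injective ξ) (l : Fin (n + 1) → ℤ) (hl : Antitone l) :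
    schur (n + 1) ξ l = ∑ m ∈ interlacing l,
      ξ (Fin.last n) ^ (∑ i, l i - ∑ j, m j) * schur n (fun i => ξ i.castSucc) m := by
  have hprod : ∏ i : Fin n, (ξ i.castSucc - ξ (Fin.last n)) ≠ 0 :=
    prod_ne_zero_iff.mpr fun i _ => sub_ne_zero.mpr (hinj.ne (Fin.castSucc_lt_last i).ne)
  simp only [schur]
  rw [alternant_succ ξ hξ l hl, alternant_succ_zero ξ hξ, mul_div_mul_left _ _ hprod, sum_div]
  simp only [mul_div_assoc]

end Alternant

theorem schur_pos {K : Type*} [Field K] [LinearOrder K] [IsStrictOrderedRing K] {n : ℕ}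
    (x : Fin n → K) (hx : ∀ i, 0 < x i) (hinj : Function.Injective x) (l : Fin n → ℤ)
    (hl : Antitone l) : 0 < schur n x l := by
  induction n with
  | zero => simp [schur, alternant]
  | succ n ih =>
    rw [schur_succ x (fun i => (hx i).ne') hinj l hl]
    refine sum_pos (fun m hm => mul_pos (zpow_pos (hx _) _) (ih _ (fun i => hx _)
      (hinj.comp (Fin.castSucc_injective n)) m (antitone_of_mem_interlacing hm)))
      ⟨_, castSucc_mem_interlacing hl⟩

theorem linkP_of_mem {N : ℕ} {ξ : Fin (N + 1) → ℝ} (hξ : ∀ i, ξ i ≠ 0)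
    (hinj : Function.Injective ξ) {l : Fin (N + 1) → ℤ} {m : Fin N → ℤ}
    (hm : m ∈ interlacing l) :
    linkP N ξ l m = ξ (Fin.last N) ^ (∑ i, l i - ∑ j, m j) *
      schur N (fun i => ξ i.castSucc) m / schur (N + 1) ξ l := by
  have hbig : det (of fun i j : Fin (N + 1) => ξ i ^ (l j + (N : ℤ) - (j : ℤ))) =
      alternant (N + 1) ξ l := by
    simp only [alternant, Nat.cast_add, Nat.cast_one, ← add_assoc, add_sub_cancel_right]
  have hsmall : det (of fun i j : Fin N => ξ i.castSucc ^ (m j + (N : ℤ) - 1 - (j : ℤ))) =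
      alternant N (fun i => ξ i.castSucc) m := rfl
  have hZ := alternant_zero_ne_zero _ (fun i => hξ i.castSucc)
    (hinj.comp (Fin.castSucc_injective N))
  rw [linkP, if_pos (mem_interlacing.mp hm), hbig, hsmall, schur, schur, alternant_succ_zero ξ hξ]
  field_simp

theorem linkP_of_not_mem {N : ℕ} {ξ : Fin (N + 1) → ℝ} {l : Fin (N + 1) → ℤ} {m : Fin N → ℤ}
    (hm : m ∉ interlacing l) : linkP N ξ l m = 0 :=
  if_neg (mt mem_interlacing.mpr hm)

/-- The link quantities are nonnegative and sum to `1` over all `μ` of length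
`N` interlacing with `λ`. -/
theorem stmt10 (N : ℕ) (ξ : Fin (N + 1) → ℝ) (hpos : ∀ i, 0 < ξ i)
    (hinj : Function.Injective ξ) (l : Fin (N + 1) → ℤ) (hl : Antitone l) :
    (∀ m : Fin N → ℤ, 0 ≤ linkP N ξ l m) ∧
      HasSum (fun m : Fin N → ℤ => linkP N ξ l m) 1 := by
  have hξ : ∀ i, ξ i ≠ 0 := fun i => (hpos i).ne'
  have hl_pos := schur_pos ξ hpos hinj l hl
  refine ⟨fun m => ?_, ?_⟩
  · by_cases hm : m ∈ interlacing l
    · have hm_pos := schur_pos _ (fun i => hpos _) (hinj.comp (Fin.castSucc_injective N)) m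
        (antitone_of_mem_interlacing hm)
      rw [linkP_of_mem hξ hinj hm]
      exact div_nonneg (mul_nonneg (zpow_nonneg (hpos _).le _) hm_pos.le) hl_pos.le
    · rw [linkP_of_not_mem hm]
  · have htotal : ∑ m ∈ interlacing l, linkP N ξ l m = 1 := by
      rw [sum_congr rfl fun m hm => linkP_of_mem hξ hinj hm, ← sum_div,
        ← schur_succ ξ hξ hinj l hl, div_self hl_pos.ne']
    exact htotal ▸ hasSum_sum_of_ne_finset_zero fun m hm => linkP_of_not_mem hm
end

section
/- For 0 < q < 1 and any sequence of integers a[k+1] < a[k+2] < ... and its modification b[1] < b[2] < ... differing from (a[k+1], a[k+2], ...) in at most k entries, the ratio ∏_{i<j}(1 - q^{b[j]-b[i]}) / ∏_{k+1 ≤ i < j}(1 - q^{a[j]-a[i]}) is bounded away from 0 and ∞ by constants depending only on k and q (not on the length of the sequences). -/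
/-!
For strictly increasing `x`, every factor of `qVandermonde q x = ∏_{i<j} (1 - q^(x_j - x_i))` lies
in `[0, 1]`. A factor of `qVandermonde q b` whose two indices avoid the set `T` of changed positions
equals the corresponding factor of `qVandermonde q a`. The remaining factors are covered by the rows
and columns through `t ∈ T`, and each row or column is a product of `1 - q^e` over distinct positive
integers `e`, hence at least `exp (-(1 - q)⁻²)` because `1 - x ≥ exp (-x / (1 - q))` for
`0 ≤ x ≤ q` and `∑ q^e ≤ (1 - q)⁻¹`. So `qVandermonde q b ≥ exp (-(1 - q)⁻²)^(2k) qVandermonde q a`,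
and symmetrically.
-/

open Finset Real

lemma exp_neg_div_le_one_sub {x q : ℝ} (hx0 : 0 ≤ x) (hxq : x ≤ q) (hq1 : q < 1) :
    exp (-(x / (1 - q))) ≤ 1 - x := by
  have h1x : 0 < 1 - x := by linarith
  calc exp (-(x / (1 - q))) ≤ exp (1 - (1 - x)⁻¹) := by
        rw [exp_le_exp, show 1 - (1 - x)⁻¹ = -(x / (1 - x)) by field_simp; ring, neg_le_neg_iff]
        exact div_le_div_of_nonneg_left hx0 (by linarith) (by linarith)
    _ ≤ exp (log (1 - x)) := by gcongr; exact one_sub_inv_le_log_of_pos h1x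
    _ = 1 - x := exp_log h1x

lemma exp_neg_sum_div_le_prod_one_sub {ι : Type*} {q : ℝ} (hq1 : q < 1) {s : Finset ι} {x : ι → ℝ}
    (hx0 : ∀ i ∈ s, 0 ≤ x i) (hxq : ∀ i ∈ s, x i ≤ q) :
    exp (-(∑ i ∈ s, x i) / (1 - q)) ≤ ∏ i ∈ s, (1 - x i) := by
  rw [neg_div, sum_div, ← sum_neg_distrib, exp_sum]
  exact prod_le_prod (fun _ _ => (exp_pos _).le)
    fun i hi => exp_neg_div_le_one_sub (hx0 i hi) (hxq i hi) hq1

lemma sum_zpow_le_of_injOn {ι : Type*} {q : ℝ} (hq0 : 0 ≤ q) (hq1 : q < 1) {s : Finset ι}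
    {e : ι → ℤ} (he : Set.InjOn e s) (he0 : ∀ i ∈ s, 0 ≤ e i) :
    ∑ i ∈ s, q ^ e i ≤ (1 - q)⁻¹ := by
  have hinj : Set.InjOn (fun i => (e i).toNat) s := fun i hi j hj hij =>
    he hi hj (by have := he0 i hi; have := he0 j hj; simp only at hij; omega)
  calc ∑ i ∈ s, q ^ e i = ∑ n ∈ s.image (fun i => (e i).toNat), q ^ n := by
        rw [sum_image hinj]
        refine sum_congr rfl fun i hi => ?_
        rw [← zpow_natCast, Int.toNat_of_nonneg (he0 i hi)]
    _ ≤ ∑' n : ℕ, q ^ n :=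
        (summable_geometric_of_lt_one hq0 hq1).sum_le_tsum _ fun n _ => pow_nonneg hq0 n
    _ = (1 - q)⁻¹ := tsum_geometric_of_lt_one hq0 hq1

lemma exp_le_prod_one_sub_zpow {ι : Type*} {q : ℝ} (hq0 : 0 < q) (hq1 : q < 1) {s : Finset ι}
    {e : ι → ℤ} (he : Set.InjOn e s) (he1 : ∀ i ∈ s, 1 ≤ e i) :
    exp (-((1 - q) ^ 2)⁻¹) ≤ ∏ i ∈ s, (1 - q ^ e i) := by
  have hsum := sum_zpow_le_of_injOn hq0.le hq1 he fun i hi => by linarith [he1 i hi]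
  refine le_trans ?_ (exp_neg_sum_div_le_prod_one_sub hq1 (fun i _ => (zpow_pos hq0 _).le)
    fun i hi => ?_)
  · have hq : 0 < 1 - q := by linarith
    rw [exp_le_exp, neg_div, neg_le_neg_iff, sq, mul_inv, ← div_eq_inv_mul]
    gcongr
  · simpa using zpow_le_zpow_right_of_le_one₀ hq0 hq1.le (he1 i hi)

lemma mul_ite_mul_ite_le (p r : Prop) [Decidable p] [Decidable r] {x y : ℝ} (hx1 : x ≤ 1)
    (hy0 : 0 ≤ y) (hy1 : y ≤ 1) (hxy : ¬p → ¬r → x = y) :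
    x * ((if p then y else 1) * (if r then y else 1)) ≤ y := by
  by_cases hp : p <;> by_cases hr : r <;> simp only [hp, hr, if_true, if_false, mul_one, one_mul]
  · nlinarith [mul_nonneg hy0 hy0]
  · nlinarith
  · nlinarith
  · exact (hxy hp hr).le

lemma one_sub_zpow_sub_nonneg {ι : Type*} [Preorder ι] {q : ℝ} {a : ι → ℤ} (hq0 : 0 < q)
    (hq1 : q ≤ 1) (ha : Monotone a) {i j : ι} (hij : i ≤ j) : 0 ≤ 1 - q ^ (a j - a i) := by
  have := zpow_le_one₀ hq0 hq1 (show 0 ≤ a j - a i by linarith [ha hij])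
  linarith

section

variable {ι : Type*} [Fintype ι] [LinearOrder ι]

noncomputable def qVandermonde (q : ℝ) (a : ι → ℤ) : ℝ :=
  ∏ i, ∏ j ∈ univ.filter (i < ·), (1 - q ^ (a j - a i))

variable {q : ℝ} {a b : ι → ℤ}

lemma qVandermonde_nonneg (hq0 : 0 < q) (hq1 : q ≤ 1) (ha : Monotone a) :
    0 ≤ qVandermonde q a :=
  prod_nonneg fun _ _ => prod_nonneg fun _ hj =>
    one_sub_zpow_sub_nonneg hq0 hq1 ha (mem_filter.1 hj).2.le

lemma exp_le_prod_one_sub_zpow_sub_of_gt (hq0 : 0 < q) (hq1 : q < 1) (ha : StrictMono a)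
    (t : ι) : exp (-((1 - q) ^ 2)⁻¹) ≤ ∏ j ∈ univ.filter (t < ·), (1 - q ^ (a j - a t)) :=
  exp_le_prod_one_sub_zpow hq0 hq1 (fun i _ j _ h => ha.injective (by simpa using h))
    fun j hj => by linarith [ha (mem_filter.1 hj).2]

lemma exp_le_prod_one_sub_zpow_sub_of_lt (hq0 : 0 < q) (hq1 : q < 1) (ha : StrictMono a)
    (t : ι) : exp (-((1 - q) ^ 2)⁻¹) ≤ ∏ i ∈ univ.filter (· < t), (1 - q ^ (a t - a i)) :=
  exp_le_prod_one_sub_zpow hq0 hq1 (fun i _ j _ h => ha.injective (by simpa using h))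
    fun i hi => by linarith [ha (mem_filter.1 hi).2]

lemma exp_pow_card_le_prod_rows (hq0 : 0 < q) (hq1 : q < 1) (ha : StrictMono a)
    (T : Finset ι) : exp (-((1 - q) ^ 2)⁻¹) ^ #T ≤
      ∏ i, ∏ j ∈ univ.filter (i < ·), if i ∈ T then 1 - q ^ (a j - a i) else 1 := by
  classical
  simp_rw [prod_ite_irrel, prod_const_one]
  rw [prod_ite_mem, univ_inter, ← prod_const]
  exact prod_le_prod (fun _ _ => (exp_pos _).le)
    fun i _ => exp_le_prod_one_sub_zpow_sub_of_gt hq0 hq1 ha i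

lemma exp_pow_card_le_prod_cols (hq0 : 0 < q) (hq1 : q < 1) (ha : StrictMono a)
    (T : Finset ι) : exp (-((1 - q) ^ 2)⁻¹) ^ #T ≤
      ∏ i, ∏ j ∈ univ.filter (i < ·), if j ∈ T then 1 - q ^ (a j - a i) else 1 := by
  classical
  rw [prod_comm' (t' := univ) (s' := fun j => univ.filter (· < j)) (by simp)]
  simp_rw [prod_ite_irrel, prod_const_one]
  rw [prod_ite_mem, univ_inter, ← prod_const]
  exact prod_le_prod (fun _ _ => (exp_pos _).le)
    fun j _ => exp_le_prod_one_sub_zpow_sub_of_lt hq0 hq1 ha j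

theorem exp_pow_mul_qVandermonde_le (hq0 : 0 < q) (hq1 : q < 1) (ha : StrictMono a)
    (hb : StrictMono b) {k : ℕ} (hk : #(univ.filter fun i => a i ≠ b i) ≤ k) :
    exp (-((1 - q) ^ 2)⁻¹) ^ (2 * k) * qVandermonde q a ≤ qVandermonde q b := by
  set c := exp (-((1 - q) ^ 2)⁻¹)
  set T := univ.filter fun i => a i ≠ b i
  set F : ι → ι → ℝ := fun i j => 1 - q ^ (b j - b i)
  set G : ι → ι → ℝ := fun i j => (if i ∈ T then F i j else 1) * (if j ∈ T then F i j else 1)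
  have hF : ∀ i j, i < j → 0 ≤ F i j ∧ F i j ≤ 1 := fun i j hij =>
    ⟨one_sub_zpow_sub_nonneg hq0 hq1.le hb.monotone hij.le, by linarith [zpow_pos hq0 (b j - b i)]⟩
  have hpair : ∀ i j, i < j → (1 - q ^ (a j - a i)) * G i j ≤ F i j := by
    intro i j hij
    refine mul_ite_mul_ite_le _ _ (by linarith [zpow_pos hq0 (a j - a i)]) (hF i j hij).1
      (hF i j hij).2 fun hi hj => ?_
    simp only [T, mem_filter, mem_univ, true_and, not_not] at hi hj
    rw [hi, hj]
  have hc : c ^ (2 * k) ≤ c ^ #T * c ^ #T := by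
    rw [← pow_add, ← two_mul]
    exact pow_le_pow_of_le_one (exp_pos _).le (exp_le_one_iff.2 (neg_nonpos.2 (by positivity)))
      (by omega)
  have hrows := exp_pow_card_le_prod_rows hq0 hq1 hb T
  have hcT : 0 ≤ c ^ #T := by positivity
  have hprod_nonneg : ∀ i, ∀ j ∈ univ.filter (i < ·), 0 ≤ (1 - q ^ (a j - a i)) * G i j :=
    fun i j hj => have hij := (mem_filter.1 hj).2
      mul_nonneg (one_sub_zpow_sub_nonneg hq0 hq1.le ha.monotone hij.le) (mul_nonneg
        (ite_nonneg (hF i j hij).1 zero_le_one) (ite_nonneg (hF i j hij).1 zero_le_one))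
  calc c ^ (2 * k) * qVandermonde q a
      ≤ (∏ i, ∏ j ∈ univ.filter (i < ·), if i ∈ T then F i j else 1) *
          (∏ i, ∏ j ∈ univ.filter (i < ·), if j ∈ T then F i j else 1) * qVandermonde q a :=
        mul_le_mul_of_nonneg_right (hc.trans (mul_le_mul hrows
          (exp_pow_card_le_prod_cols hq0 hq1 hb T) hcT (hcT.trans hrows)))
          (qVandermonde_nonneg hq0 hq1.le ha.monotone)
    _ = ∏ i, ∏ j ∈ univ.filter (i < ·), (1 - q ^ (a j - a i)) * G i j := by
        simp only [qVandermonde, G, prod_mul_distrib]; ring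
    _ ≤ qVandermonde q b := prod_le_prod (fun i _ => prod_nonneg (hprod_nonneg i))
        fun i _ => prod_le_prod (hprod_nonneg i) fun j hj => hpair i j (mem_filter.1 hj).2

end

/-- If `a` and `b` are strictly increasing integer sequences of the same length
agreeing in all but at most `k` positions, then the ratio
`∏_{i<j}(1-q^{b_j-b_i}) / ∏_{i<j}(1-q^{a_j-a_i})` is bounded away from `0` and
`∞` by constants depending only on `q` and `k` (not on the length). -/
theorem stmt17 (q : ℝ) (hq0 : 0 < q) (hq1 : q < 1) (k : ℕ) :
    ∃ C₁ C₂ : ℝ, 0 < C₁ ∧ 0 < C₂ ∧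
      ∀ (m : ℕ) (a b : Fin m → ℤ), StrictMono a → StrictMono b →
        (Finset.univ.filter (fun i => a i ≠ b i)).card ≤ k →
        C₁ * (∏ i : Fin m, ∏ j ∈ Finset.univ.filter (fun j => i < j),
            (1 - q ^ (a j - a i))) ≤
          (∏ i : Fin m, ∏ j ∈ Finset.univ.filter (fun j => i < j),
            (1 - q ^ (b j - b i))) ∧
        (∏ i : Fin m, ∏ j ∈ Finset.univ.filter (fun j => i < j),
            (1 - q ^ (b j - b i))) ≤
          C₂ * (∏ i : Fin m, ∏ j ∈ Finset.univ.filter (fun j => i < j),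
            (1 - q ^ (a j - a i))) := by
  set C := exp (-((1 - q) ^ 2)⁻¹) ^ (2 * k)
  have hC : 0 < C := by positivity
  refine ⟨C, C⁻¹, hC, inv_pos.2 hC, fun m a b ha hb hk => ⟨?_, ?_⟩⟩
  · exact exp_pow_mul_qVandermonde_le hq0 hq1 ha hb hk
  · rw [le_inv_mul_iff₀ hC]
    exact exp_pow_mul_qVandermonde_le hq0 hq1 hb ha (by simpa only [ne_comm] using hk)
end

section
/- Let P_t be a Markov semigroup of transition kernels on a locally compact metrizable space Q, and suppose there is a sequence of countable discrete spaces Γ_N with Markov links Λ_N^∞ : Q → M_p(Γ_N) that are Feller kernels, whose induced maps (Λ_N^∞)^* have union of ranges dense in C₀(Q), and Markov semigroups P_{t,N} on Γ_N intertwined by the links (P_{t,N} ∘ Λ_N^∞ = Λ_N^∞ ∘ P_t in the appropriate sense). If each P_{t,N}^* preserves C₀(Γ_N) and is strongly continuous at t = 0, then P_t^* preserves C₀(Q) and is strongly continuous at t = 0, i.e., the process on Q is Feller. -/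
/-! The links `Λ_N^*` and the kernels `P_t^*` are sup-norm contractions, so `P_t^* g` is a uniform
limit of the functions `P_t^* Λ_N^* f = Λ_N^* P_{t,N}^* f`, which lie in `C₀(Q)`; and `C₀(Q)` is
closed under uniform limits. Strong continuity follows by an `ε/3` argument: approximate `g` by
`Λ_N^* f` and transport the strong continuity of `P_{t,N}^*` along the intertwining relation. -/

open MeasureTheory ProbabilityTheory Filter

/-- A function is in `C₀`: continuous and vanishing at infinity. -/
def IsC0 {X : Type*} [TopologicalSpace X] (f : X → ℝ) : Prop :=
  Continuous f ∧ Tendsto f (cocompact X) (nhds 0)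

/-- The action of a Markov kernel on functions, `(κ* f)(x) = ∫ f dκ(x)`. -/
noncomputable def kact {X Y : Type*} [MeasurableSpace X] [MeasurableSpace Y]
    (κ : Kernel X Y) (f : Y → ℝ) (x : X) : ℝ :=
  ∫ y, f y ∂ κ x

section IsC0

variable {X : Type*} [TopologicalSpace X]

theorem IsC0.exists_norm_le {f : X → ℝ} (hf : IsC0 f) : ∃ C, ∀ x, ‖f x‖ ≤ C :=
  ⟨_, (ZeroAtInftyContinuousMap.toBCF ⟨⟨f, hf.1⟩, hf.2⟩).norm_coe_le_norm⟩

theorem IsC0.integrable [MeasurableSpace X] {μ : Measure X} [IsFiniteMeasure μ] {f : X → ℝ}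
    (hf : IsC0 f) (hfm : Measurable f) : Integrable f μ :=
  let ⟨C, hC⟩ := hf.exists_norm_le
  .of_bound hfm.aestronglyMeasurable C (ae_of_all _ hC)

theorem isC0_of_forall_abs_sub_le {F : X → ℝ}
    (h : ∀ ε : ℝ, 0 < ε → ∃ g : X → ℝ, IsC0 g ∧ ∀ x, |F x - g x| ≤ ε) : IsC0 F := by
  constructor
  · refine continuous_of_uniform_approx_of_continuous fun u hu => ?_
    obtain ⟨ε, hε, hεu⟩ := Metric.uniformity_basis_dist_le.mem_iff.mp hu
    obtain ⟨g, hg, hFg⟩ := h ε hε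
    exact ⟨g, hg.1, fun x => hεu (hFg x)⟩
  · refine Metric.tendsto_nhds.mpr fun ε hε => ?_
    obtain ⟨g, hg, hFg⟩ := h (ε / 2) (half_pos hε)
    filter_upwards [Metric.tendsto_nhds.mp hg.2 (ε / 2) (half_pos hε)] with x hgx
    rw [Real.dist_eq] at hgx ⊢
    linarith [abs_sub_le (F x) (g x) 0, hFg x]

end IsC0

theorem abs_kact_sub_kact_le {X Y : Type*} [MeasurableSpace X] [MeasurableSpace Y]
    (κ : Kernel X Y) [IsMarkovKernel κ] {g h : Y → ℝ} {ε : ℝ} {x : X}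
    (hg : Integrable g (κ x)) (hh : Integrable h (κ x)) (hgh : ∀ y, |g y - h y| ≤ ε) :
    |kact κ g x - kact κ h x| ≤ ε := by
  rw [kact, kact, ← integral_sub hg hh]
  simpa using norm_integral_le_of_norm_le_const (μ := κ x) (f := fun y => g y - h y)
    (ae_of_all _ hgh)

theorem stmt19_general
    {Q : Type*} [TopologicalSpace Q] [MeasurableSpace Q] [BorelSpace Q]
    (Γ : ℕ → Type*) [∀ N, Countable (Γ N)]
    [∀ N, TopologicalSpace (Γ N)]
    [∀ N, MeasurableSpace (Γ N)] [∀ N, MeasurableSingletonClass (Γ N)]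
    (P : ℝ → Kernel Q Q) (PN : ∀ N : ℕ, ℝ → Kernel (Γ N) (Γ N))
    (Λ : ∀ N : ℕ, Kernel Q (Γ N))
    (hPmarkov : ∀ t : ℝ, 0 ≤ t → IsMarkovKernel (P t))
    (hΛmarkov : ∀ N, IsMarkovKernel (Λ N))
    -- the links are Feller kernels
    (hΛFeller : ∀ (N : ℕ) (f : Γ N → ℝ), IsC0 f → IsC0 (kact (Λ N) f))
    -- the union of the ranges of the dual link maps is dense in `C₀(Q)`
    (hdense : ∀ g : Q → ℝ, IsC0 g → ∀ ε : ℝ, 0 < ε →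
      ∃ (N : ℕ) (f : Γ N → ℝ), IsC0 f ∧ ∀ x : Q, |kact (Λ N) f x - g x| ≤ ε)
    -- intertwining: `P_t^* ∘ Λ_N^* = Λ_N^* ∘ P_{t,N}^*` on `C₀(Γ_N)`
    (hcomm : ∀ (t : ℝ), 0 ≤ t → ∀ (N : ℕ) (f : Γ N → ℝ), IsC0 f →
      kact (P t) (kact (Λ N) f) = kact (Λ N) (kact (PN N t) f))
    -- each `P_{t,N}^*` preserves `C₀(Γ_N)`
    (hPNFeller : ∀ (N : ℕ) (t : ℝ), 0 ≤ t → ∀ f : Γ N → ℝ, IsC0 f →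
      IsC0 (kact (PN N t) f))
    -- strong continuity of `P_{t,N}^*` at `t = 0`
    (hPNcont : ∀ (N : ℕ) (f : Γ N → ℝ), IsC0 f → ∀ ε : ℝ, 0 < ε →
      ∃ δ : ℝ, 0 < δ ∧ ∀ t : ℝ, 0 ≤ t → t < δ →
        ∀ x : Γ N, |kact (PN N t) f x - f x| ≤ ε) :
    (∀ t : ℝ, 0 ≤ t → ∀ g : Q → ℝ, IsC0 g → IsC0 (kact (P t) g)) ∧
      ∀ g : Q → ℝ, IsC0 g → ∀ ε : ℝ, 0 < ε →
        ∃ δ : ℝ, 0 < δ ∧ ∀ t : ℝ, 0 ≤ t → t < δ →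
          ∀ x : Q, |kact (P t) g x - g x| ≤ ε := by
  have hP_close : ∀ t, 0 ≤ t → ∀ {g : Q → ℝ} {N} {f : Γ N → ℝ} {ε}, IsC0 g → IsC0 f →
      (∀ x, |kact (Λ N) f x - g x| ≤ ε) →
      ∀ x, |kact (P t) g x - kact (Λ N) (kact (PN N t) f) x| ≤ ε := by
    intro t ht g N f ε hg hf hfg x
    have := hPmarkov t ht
    have hΛf := hΛFeller N f hf
    rw [← hcomm t ht N f hf]
    exact abs_kact_sub_kact_le _ (hg.integrable hg.1.measurable)
      (hΛf.integrable hΛf.1.measurable) fun y => abs_sub_comm (g y) _ ▸ hfg y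
  refine ⟨fun t ht g hg => isC0_of_forall_abs_sub_le fun ε hε => ?_, fun g hg ε hε => ?_⟩
  · obtain ⟨N, f, hf, hfg⟩ := hdense g hg ε hε
    exact ⟨_, hΛFeller N _ (hPNFeller N t ht f hf), hP_close t ht hg hf hfg⟩
  · obtain ⟨N, f, hf, hfg⟩ := hdense g hg (ε / 3) (by positivity)
    obtain ⟨δ, hδ, hPNf⟩ := hPNcont N f hf (ε / 3) (by positivity)
    refine ⟨δ, hδ, fun t ht htδ x => ?_⟩
    have := hΛmarkov N
    have hPNf' := hPNFeller N t ht f hf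
    have hΛ_close : |kact (Λ N) (kact (PN N t) f) x - kact (Λ N) f x| ≤ ε / 3 :=
      abs_kact_sub_kact_le _ (hPNf'.integrable .of_discrete) (hf.integrable .of_discrete)
        (hPNf t ht htδ)
    linarith [abs_sub_le (kact (P t) g x) (kact (Λ N) (kact (PN N t) f) x) (g x),
      abs_sub_le (kact (Λ N) (kact (PN N t) f) x) (kact (Λ N) f x) (g x),
      hP_close t ht hg hf hfg x, hfg x]

/-- Abstract Feller criterion: if a Markov semigroup `P_t` on a locally compact
metrizable space `Q` is intertwined with Feller semigroups `P_{t,N}` on countable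
discrete spaces `Γ_N` via Feller Markov links `Λ_N : Q → M_p(Γ_N)` whose dual
ranges are jointly dense in `C₀(Q)`, and each `P_{t,N}^*` preserves `C₀(Γ_N)` and
is strongly continuous at `t = 0`, then `P_t^*` preserves `C₀(Q)` and is strongly
continuous at `t = 0`, i.e. the process on `Q` is Feller. -/
theorem stmt19
    {Q : Type*} [TopologicalSpace Q] [LocallyCompactSpace Q]
    [TopologicalSpace.MetrizableSpace Q] [MeasurableSpace Q] [BorelSpace Q]
    (Γ : ℕ → Type*) [∀ N, Countable (Γ N)]
    [∀ N, TopologicalSpace (Γ N)] [∀ N, DiscreteTopology (Γ N)]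
    [∀ N, MeasurableSpace (Γ N)] [∀ N, MeasurableSingletonClass (Γ N)]
    (P : ℝ → Kernel Q Q) (PN : ∀ N : ℕ, ℝ → Kernel (Γ N) (Γ N))
    (Λ : ∀ N : ℕ, Kernel Q (Γ N))
    (hPmarkov : ∀ t : ℝ, 0 ≤ t → IsMarkovKernel (P t))
    (hPNmarkov : ∀ (N : ℕ) (t : ℝ), 0 ≤ t → IsMarkovKernel (PN N t))
    (hΛmarkov : ∀ N, IsMarkovKernel (Λ N))
    (hPsemi : ∀ s t : ℝ, 0 ≤ s → 0 ≤ t → (P s).comp (P t) = P (s + t))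
    (hPNsemi : ∀ (N : ℕ) (s t : ℝ), 0 ≤ s → 0 ≤ t →
      (PN N s).comp (PN N t) = PN N (s + t))
    -- the links are Feller kernels
    (hΛFeller : ∀ (N : ℕ) (f : Γ N → ℝ), IsC0 f → IsC0 (kact (Λ N) f))
    -- the union of the ranges of the dual link maps is dense in `C₀(Q)`
    (hdense : ∀ g : Q → ℝ, IsC0 g → ∀ ε : ℝ, 0 < ε →
      ∃ (N : ℕ) (f : Γ N → ℝ), IsC0 f ∧ ∀ x : Q, |kact (Λ N) f x - g x| ≤ ε)
    -- intertwining: `P_t^* ∘ Λ_N^* = Λ_N^* ∘ P_{t,N}^*` on `C₀(Γ_N)`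
    (hcomm : ∀ (t : ℝ), 0 ≤ t → ∀ (N : ℕ) (f : Γ N → ℝ), IsC0 f →
      kact (P t) (kact (Λ N) f) = kact (Λ N) (kact (PN N t) f))
    -- each `P_{t,N}^*` preserves `C₀(Γ_N)`
    (hPNFeller : ∀ (N : ℕ) (t : ℝ), 0 ≤ t → ∀ f : Γ N → ℝ, IsC0 f →
      IsC0 (kact (PN N t) f))
    -- strong continuity of `P_{t,N}^*` at `t = 0`
    (hPNcont : ∀ (N : ℕ) (f : Γ N → ℝ), IsC0 f → ∀ ε : ℝ, 0 < ε →
      ∃ δ : ℝ, 0 < δ ∧ ∀ t : ℝ, 0 ≤ t → t < δ →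
        ∀ x : Γ N, |kact (PN N t) f x - f x| ≤ ε) :
    (∀ t : ℝ, 0 ≤ t → ∀ g : Q → ℝ, IsC0 g → IsC0 (kact (P t) g)) ∧
      ∀ g : Q → ℝ, IsC0 g → ∀ ε : ℝ, 0 < ε →
        ∃ δ : ℝ, 0 < δ ∧ ∀ t : ℝ, 0 ≤ t → t < δ →
          ∀ x : Q, |kact (P t) g x - g x| ≤ ε :=
  stmt19_general Γ P PN Λ hPmarkov hΛmarkov hΛFeller hdense hcomm hPNFeller hPNcont
end
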